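/- For every integer n ≥ 2, the vertex connectivity of the bubble-sort star graph satisfies κ(BS_n) = 2n − 3. -/

import Mathlib

/-!
`BS n` is a Cayley graph of `Perm (Fin n)` with respect to a set of `2n - 3` transpositions, so
it is vertex-transitive, `(2n - 3)`-regular and connected, and it is triangle-free because a
product of two transpositions is even. For such a graph the connectivity equals the degree `d`
(Mader's atom argument). Call a nonempty set `A` a fragment if some vertex is neither in `A` nor
adjacent to it, and an atom if its boundary `∂A` has the least size `κ` and `A` is smallest among
such fragments. Submodularity of `|∂·|` shows that an atom with `|A| > κ` lies inside every
minimum fragment it meets; moving `A` by an automorphism onto a vertex of `∂A` then gives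
`|A| ≤ κ`. If `κ < d`, then `A` contains an edge `xy`, and the disjoint neighbourhoods of `x`
and `y` lie in `A ∪ ∂A`, so `2d ≤ |A| + κ ≤ 2κ`. Deleting the neighbours of a vertex gives
`κ ≤ d`.
-/

/-- The generating set S₁ = {(1 j) : 2 ≤ j ≤ n} ∪ {(j j+1) : 2 ≤ j ≤ n−1},
where elements of {1,…,n} are encoded zero-indexed as `Fin n` (value k represents k+1). -/
def bsGen (n : ℕ) : Set (Equiv.Perm (Fin n)) :=
  {s | ∃ i j : Fin n, s = Equiv.swap i j ∧
      (((i : ℕ) = 0 ∧ j ≠ i) ∨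
       ((j : ℕ) = (i : ℕ) + 1 ∧ 1 ≤ (i : ℕ)))}

/-- The bubble-sort star graph BS_n = Cay(S_n, S₁). -/
def BS (n : ℕ) : SimpleGraph (Equiv.Perm (Fin n)) where
  Adj g h := g ≠ h ∧ g⁻¹ * h ∈ bsGen n
  symm := ⟨by
    rintro g h ⟨hne, i, j, hs, hc⟩
    refine ⟨hne.symm, i, j, ?_, hc⟩
    have hinv : h⁻¹ * g = (g⁻¹ * h)⁻¹ := by group
    rw [hinv, hs, Equiv.swap_inv]⟩
  loopless := ⟨fun g h => h.1 rfl⟩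

/-- The vertex connectivity κ(G): the least size of a vertex set S such that G − S
is disconnected or has at most one vertex. -/
noncomputable def kappa {V : Type*} (G : SimpleGraph V) : ℕ :=
  sInf {k | ∃ S : Set V, S.ncard = k ∧ (¬ (G.induce Sᶜ).Connected ∨ Sᶜ.ncard ≤ 1)}

namespace SimpleGraph

variable {V W : Type*} {G : SimpleGraph V} {A B X : Set V}

def vertexBoundary (G : SimpleGraph V) (A : Set V) : Set V :=
  {v | v ∉ A ∧ ∃ a ∈ A, G.Adj a v}

def farSide (G : SimpleGraph V) (A : Set V) : Set V :=
  {v | v ∉ A ∧ ∀ a ∈ A, ¬G.Adj a v}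

lemma mem_or_mem_vertexBoundary_or_mem_farSide (A : Set V) (v : V) :
    v ∈ A ∨ v ∈ G.vertexBoundary A ∨ v ∈ G.farSide A := by
  by_cases hA : v ∈ A
  · exact .inl hA
  by_cases hadj : ∃ a ∈ A, G.Adj a v
  · exact .inr (.inl ⟨hA, hadj⟩)
  · exact .inr (.inr ⟨hA, fun a ha hav => hadj ⟨a, ha, hav⟩⟩)

lemma disjoint_vertexBoundary : Disjoint A (G.vertexBoundary A) :=
  Set.disjoint_left.2 fun _ ha hb => hb.1 ha

lemma disjoint_vertexBoundary_farSide : Disjoint (G.vertexBoundary A) (G.farSide A) :=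
  Set.disjoint_left.2 fun _ ⟨_, a, ha, hadj⟩ hf => hf.2 a ha hadj

lemma subset_vertexBoundary_of_disjoint (hA : Disjoint X A) (hF : Disjoint X (G.farSide A)) :
    X ⊆ G.vertexBoundary A := by
  intro v hv
  rcases mem_or_mem_vertexBoundary_or_mem_farSide (G := G) A v with h | h | h
  · exact (Set.disjoint_left.1 hA hv h).elim
  · exact h
  · exact (Set.disjoint_left.1 hF hv h).elim

lemma farSide_anti (h : A ⊆ B) : G.farSide B ⊆ G.farSide A :=
  fun _ ⟨hB, hadj⟩ => ⟨fun hA => hB (h hA), fun a ha => hadj a (h ha)⟩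

lemma farSide_union : G.farSide (A ∪ B) = G.farSide A ∩ G.farSide B := by
  ext v
  simp only [farSide, Set.mem_union, Set.mem_inter_iff, Set.mem_ofPred_eq, not_or, or_imp,
    forall_and]
  tauto

lemma subset_farSide_farSide : A ⊆ G.farSide (G.farSide A) :=
  fun v hv => ⟨fun hf => hf.1 hv, fun _ hf hadj => hf.2 v hv hadj.symm⟩

lemma vertexBoundary_farSide_subset : G.vertexBoundary (G.farSide A) ⊆ G.vertexBoundary A := by
  rintro v ⟨hv, a, ha, hadj⟩
  refine subset_vertexBoundary_of_disjoint ?_ ?_ (Set.mem_singleton v) <;>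
    rw [Set.disjoint_singleton_left]
  · exact fun hvA => ha.2 v hvA hadj.symm
  · exact hv

lemma farSide_farSide_of_vertexBoundary_farSide
    (h : G.vertexBoundary (G.farSide A) = G.vertexBoundary A) :
    G.farSide (G.farSide A) = A := by
  refine subset_antisymm (fun v hv => ?_) subset_farSide_farSide
  rcases mem_or_mem_vertexBoundary_or_mem_farSide (G := G) A v with hA | hb | hf
  · exact hA
  · rw [← h] at hb
    exact (Set.disjoint_left.1 disjoint_vertexBoundary_farSide hb hv).elim
  · exact (hv.1 hf).elim

lemma vertexBoundary_union_subset :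
    G.vertexBoundary (A ∪ B) ⊆ G.vertexBoundary A ∪ G.vertexBoundary B := by
  rintro v ⟨hv, a, ha | ha, hadj⟩
  · exact .inl ⟨fun h => hv (.inl h), a, ha, hadj⟩
  · exact .inr ⟨fun h => hv (.inr h), a, ha, hadj⟩

lemma vertexBoundary_inter_subset :
    G.vertexBoundary (A ∩ B) ⊆ G.vertexBoundary A ∪ G.vertexBoundary B := by
  rintro v ⟨hv, a, ⟨haA, haB⟩, hadj⟩
  by_cases hvA : v ∈ A
  · exact .inr ⟨fun hvB => hv ⟨hvA, hvB⟩, a, haB, hadj⟩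
  · exact .inl ⟨hvA, a, haA, hadj⟩

lemma vertexBoundary_inter_inter_vertexBoundary_union_subset :
    G.vertexBoundary (A ∩ B) ∩ G.vertexBoundary (A ∪ B) ⊆
      G.vertexBoundary A ∩ G.vertexBoundary B := by
  rintro v ⟨⟨_, a, ⟨haA, haB⟩, hadj⟩, hv, _⟩
  exact ⟨⟨fun h => hv (.inl h), a, haA, hadj⟩, ⟨fun h => hv (.inr h), a, haB, hadj⟩⟩

lemma ncard_vertexBoundary_inter_add_ncard_vertexBoundary_union_le [Finite V] (A B : Set V) :
    (G.vertexBoundary (A ∩ B)).ncard + (G.vertexBoundary (A ∪ B)).ncard ≤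
      (G.vertexBoundary A).ncard + (G.vertexBoundary B).ncard := by
  rw [← Set.ncard_union_add_ncard_inter, ← Set.ncard_union_add_ncard_inter (G.vertexBoundary A)]
  exact add_le_add
    (Set.ncard_le_ncard (Set.union_subset vertexBoundary_inter_subset vertexBoundary_union_subset))
    (Set.ncard_le_ncard vertexBoundary_inter_inter_vertexBoundary_union_subset)

lemma Iso.image_vertexBoundary {H : SimpleGraph W} (e : G ≃g H) (A : Set V) :
    H.vertexBoundary (e '' A) = e '' G.vertexBoundary A := by
  ext w
  obtain ⟨v, rfl⟩ := e.surjective w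
  simp only [vertexBoundary, Set.mem_ofPred_eq, e.injective.mem_set_image,
    Set.exists_mem_image, e.map_adj_iff]

lemma Iso.image_farSide {H : SimpleGraph W} (e : G ≃g H) (A : Set V) :
    H.farSide (e '' A) = e '' G.farSide A := by
  ext w
  obtain ⟨v, rfl⟩ := e.surjective w
  simp only [farSide, Set.mem_ofPred_eq, e.injective.mem_set_image,
    Set.forall_mem_image, e.map_adj_iff]

def IsFragment (G : SimpleGraph V) (A : Set V) : Prop :=
  A.Nonempty ∧ (G.farSide A).Nonempty

def IsMinFragment (G : SimpleGraph V) (A : Set V) : Prop :=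
  G.IsFragment A ∧ ∀ C, G.IsFragment C → (G.vertexBoundary A).ncard ≤ (G.vertexBoundary C).ncard

def IsAtom (G : SimpleGraph V) (A : Set V) : Prop :=
  G.IsMinFragment A ∧ ∀ C, G.IsMinFragment C → A.ncard ≤ C.ncard

lemma IsFragment.farSide (hA : G.IsFragment A) : G.IsFragment (G.farSide A) :=
  ⟨hA.2, hA.1.mono subset_farSide_farSide⟩

lemma IsFragment.vertexBoundary_nonempty (hG : G.Preconnected) (hA : G.IsFragment A) :
    (G.vertexBoundary A).Nonempty := by
  obtain ⟨u, hu⟩ := hA.1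
  obtain ⟨w, hw⟩ := hA.2
  obtain ⟨d, -, hd₁, hd₂⟩ := (hG u w).some.exists_boundary_dart A hu hw.1
  exact ⟨d.snd, hd₂, d.fst, hd₁, d.adj⟩

lemma Iso.isFragment_image {H : SimpleGraph W} (e : G ≃g H) :
    H.IsFragment (e '' A) ↔ G.IsFragment A := by
  simp only [IsFragment, Iso.image_farSide, Set.image_nonempty]

lemma Iso.isMinFragment_image {H : SimpleGraph W} (e : G ≃g H) (hA : G.IsMinFragment A) :
    H.IsMinFragment (e '' A) := by
  refine ⟨e.isFragment_image.2 hA.1, fun C hC => ?_⟩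
  obtain ⟨C, rfl⟩ := Set.image_surjective.2 e.surjective C
  simp only [Iso.image_vertexBoundary, Set.ncard_image_of_injective _ e.injective]
  exact hA.2 C (e.isFragment_image.1 hC)

lemma IsMinFragment.ncard_vertexBoundary_eq (hA : G.IsMinFragment A) (hB : G.IsMinFragment B) :
    (G.vertexBoundary A).ncard = (G.vertexBoundary B).ncard :=
  le_antisymm (hA.2 B hB.1) (hB.2 A hA.1)

lemma IsMinFragment.of_ncard_vertexBoundary_le (hA : G.IsMinFragment A) (hB : G.IsFragment B)
    (h : (G.vertexBoundary B).ncard ≤ (G.vertexBoundary A).ncard) : G.IsMinFragment B :=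
  ⟨hB, fun C hC => h.trans (hA.2 C hC)⟩

lemma Iso.isAtom_image {H : SimpleGraph W} (e : G ≃g H) (hA : G.IsAtom A) :
    H.IsAtom (e '' A) := by
  refine ⟨e.isMinFragment_image hA.1, fun C hC => ?_⟩
  obtain ⟨C, rfl⟩ := Set.image_surjective.2 e.surjective C
  have hC' : G.IsMinFragment C := by
    simpa [Set.image_image] using e.symm.isMinFragment_image hC
  simpa only [Set.ncard_image_of_injective _ e.injective] using hA.2 C hC'

def IsVertexTransitive (G : SimpleGraph V) : Prop :=
  ∀ v w : V, ∃ e : G ≃g G, e v = w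

lemma neighborSet_subset_union_vertexBoundary {x : V} (hx : x ∈ A) :
    G.neighborSet x ⊆ A ∪ G.vertexBoundary A := fun w hw => by
  by_cases hwA : w ∈ A
  · exact .inl hwA
  · exact .inr ⟨hwA, x, hx, hw⟩

lemma disjoint_neighborSet_of_adj (hG : G.CliqueFree 3) {x y : V} (hxy : G.Adj x y) :
    Disjoint (G.neighborSet x) (G.neighborSet y) :=
  Set.disjoint_left.2 fun w hwx hwy =>
    isIndepSet_neighborSet_of_triangleFree G hG w hwx.symm hwy.symm hxy.ne hxy

section Finite

variable [Finite V]

lemma exists_isAtom {F : Set V} (hF : G.IsFragment F) : ∃ A, G.IsAtom A := by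
  obtain ⟨B, hB, hBmin⟩ := Set.exists_min_image {C | G.IsFragment C}
    (fun C => (G.vertexBoundary C).ncard) (Set.toFinite _) ⟨F, hF⟩
  obtain ⟨A, hA, hAmin⟩ := Set.exists_min_image {C | G.IsMinFragment C} Set.ncard
    (Set.toFinite _) ⟨B, hB, hBmin⟩
  exact ⟨A, hA, hAmin⟩

lemma IsMinFragment.vertexBoundary_farSide (hA : G.IsMinFragment A) :
    G.vertexBoundary (G.farSide A) = G.vertexBoundary A :=
  Set.eq_of_subset_of_ncard_le vertexBoundary_farSide_subset (hA.2 _ hA.1.farSide)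

lemma IsMinFragment.farSide (hA : G.IsMinFragment A) : G.IsMinFragment (G.farSide A) :=
  hA.of_ncard_vertexBoundary_le hA.1.farSide (by rw [hA.vertexBoundary_farSide])

lemma IsMinFragment.farSide_farSide (hA : G.IsMinFragment A) : G.farSide (G.farSide A) = A :=
  farSide_farSide_of_vertexBoundary_farSide hA.vertexBoundary_farSide

lemma IsAtom.ncard_le_of_subset_vertexBoundary (hA : G.IsAtom A) (hX : G.IsMinFragment X)
    (hB : G.IsMinFragment B) (hXB : X ⊆ G.vertexBoundary B) :
    A.ncard ≤ (G.vertexBoundary A).ncard :=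
  calc A.ncard ≤ X.ncard := hA.2 X hX
    _ ≤ (G.vertexBoundary B).ncard := Set.ncard_le_ncard hXB
    _ = (G.vertexBoundary A).ncard := hB.ncard_vertexBoundary_eq hA.1

lemma IsAtom.subset_of_inter_nonempty_of_farSide_inter_nonempty (hA : G.IsAtom A)
    (hB : G.IsMinFragment B) (hAB : (A ∩ B).Nonempty)
    (hfar : (G.farSide A ∩ G.farSide B).Nonempty) : A ⊆ B := by
  have hU : G.IsFragment (A ∪ B) := ⟨hA.1.1.1.mono Set.subset_union_left, by rwa [farSide_union]⟩
  have hI : G.IsFragment (A ∩ B) :=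
    ⟨hAB, hA.1.1.2.mono (farSide_anti Set.inter_subset_left)⟩
  -- submodularity of the boundary forces `A ∩ B` to have a minimum boundary too
  have hImin : G.IsMinFragment (A ∩ B) := by
    refine hA.1.of_ncard_vertexBoundary_le hI ?_
    have := ncard_vertexBoundary_inter_add_ncard_vertexBoundary_union_le (G := G) A B
    have := hA.1.2 _ hU
    have := hA.1.ncard_vertexBoundary_eq hB
    omega
  exact Set.inter_eq_left.1
    (Set.eq_of_subset_of_ncard_le Set.inter_subset_left (hA.2 _ hImin))

lemma IsAtom.subset_of_inter_nonempty (hA : G.IsAtom A) (hB : G.IsMinFragment B)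
    (hAB : (A ∩ B).Nonempty) (hlt : (G.vertexBoundary A).ncard < A.ncard) : A ⊆ B := by
  by_cases hfar : (G.farSide A ∩ G.farSide B).Nonempty
  · exact hA.subset_of_inter_nonempty_of_farSide_inter_nonempty hB hAB hfar
  rw [← Set.not_disjoint_iff_nonempty_inter, not_not] at hfar
  by_cases hAF : Disjoint A (G.farSide B)
  · exact absurd (hA.ncard_le_of_subset_vertexBoundary hB.farSide hA.1
      (subset_vertexBoundary_of_disjoint hAF.symm hfar.symm)) hlt.not_ge
  by_cases hFB : Disjoint (G.farSide A) B
  · exact absurd (hA.ncard_le_of_subset_vertexBoundary hA.1.farSide hB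
      (subset_vertexBoundary_of_disjoint hFB hfar)) hlt.not_ge
  have hAsub : A ⊆ G.farSide B := by
    refine hA.subset_of_inter_nonempty_of_farSide_inter_nonempty hB.farSide
      (Set.not_disjoint_iff_nonempty_inter.1 hAF) ?_
    rwa [hB.farSide_farSide, ← Set.not_disjoint_iff_nonempty_inter]
  obtain ⟨x, hxA, hxB⟩ := hAB
  exact ((hAsub hxA).1 hxB).elim

lemma IsAtom.ncard_le_ncard_vertexBoundary (hG : G.Preconnected) (hT : G.IsVertexTransitive)
    (hA : G.IsAtom A) : A.ncard ≤ (G.vertexBoundary A).ncard := by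
  by_contra! hlt
  obtain ⟨t, ht⟩ := hA.1.1.vertexBoundary_nonempty hG
  obtain ⟨a, ha⟩ := hA.1.1.1
  obtain ⟨e, rfl⟩ := hT a t
  have heA : G.IsAtom (e '' A) := e.isAtom_image hA
  have hlt' : (G.vertexBoundary (e '' A)).ncard < (e '' A).ncard := by
    simpa only [Iso.image_vertexBoundary, Set.ncard_image_of_injective _ e.injective] using hlt
  have hta : e a ∈ e '' A := Set.mem_image_of_mem e ha
  by_cases h₁ : Disjoint (e '' A) A
  · by_cases h₂ : Disjoint (e '' A) (G.farSide A)
    · exact hlt.not_ge (hA.ncard_le_of_subset_vertexBoundary heA.1 hA.1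
        (subset_vertexBoundary_of_disjoint h₁ h₂))
    · have := heA.subset_of_inter_nonempty hA.1.farSide
        (Set.not_disjoint_iff_nonempty_inter.1 h₂) hlt'
      exact Set.disjoint_left.1 disjoint_vertexBoundary_farSide ht (this hta)
  · have := heA.subset_of_inter_nonempty hA.1 (Set.not_disjoint_iff_nonempty_inter.1 h₁) hlt'
    exact Set.disjoint_left.1 disjoint_vertexBoundary (this hta) ht

lemma exists_adj_of_ncard_vertexBoundary_lt {d : ℕ} (hreg : ∀ v, (G.neighborSet v).ncard = d)
    (hA : A.Nonempty) (h : (G.vertexBoundary A).ncard < d) : ∃ x ∈ A, ∃ y ∈ A, G.Adj x y := by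
  by_contra! hno
  obtain ⟨v, hv⟩ := hA
  have hsub : G.neighborSet v ⊆ G.vertexBoundary A :=
    fun w hw => ⟨fun hwA => hno v hv w hwA hw, v, hv, hw⟩
  have := Set.ncard_le_ncard hsub
  have := hreg v
  omega

lemma two_mul_le_ncard_add_ncard_vertexBoundary {d : ℕ}
    (hreg : ∀ v, (G.neighborSet v).ncard = d) (hG3 : G.CliqueFree 3) {x y : V} (hx : x ∈ A)
    (hy : y ∈ A) (hxy : G.Adj x y) : 2 * d ≤ A.ncard + (G.vertexBoundary A).ncard :=
  calc 2 * d = (G.neighborSet x ∪ G.neighborSet y).ncard := by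
        rw [Set.ncard_union_eq (disjoint_neighborSet_of_adj hG3 hxy), hreg, hreg, two_mul]
    _ ≤ (A ∪ G.vertexBoundary A).ncard := Set.ncard_le_ncard (Set.union_subset
        (neighborSet_subset_union_vertexBoundary hx) (neighborSet_subset_union_vertexBoundary hy))
    _ = A.ncard + (G.vertexBoundary A).ncard := Set.ncard_union_eq disjoint_vertexBoundary

theorem le_ncard_vertexBoundary_of_isFragment {d : ℕ} (hG : G.Preconnected)
    (hT : G.IsVertexTransitive) (hG3 : G.CliqueFree 3) (hreg : ∀ v, (G.neighborSet v).ncard = d)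
    (hF : G.IsFragment A) : d ≤ (G.vertexBoundary A).ncard := by
  by_contra! hlt
  obtain ⟨B, hB⟩ := exists_isAtom hF
  have hκ : (G.vertexBoundary B).ncard < d := (hB.1.2 A hF).trans_lt hlt
  obtain ⟨x, hx, y, hy, hxy⟩ := exists_adj_of_ncard_vertexBoundary_lt hreg hB.1.1.1 hκ
  have := two_mul_le_ncard_add_ncard_vertexBoundary hreg hG3 hx hy hxy
  have := hB.ncard_le_ncard_vertexBoundary hG hT
  omega

end Finite

lemma exists_isFragment_vertexBoundary_subset {S : Set V} (h : ¬(G.induce Sᶜ).Preconnected) :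
    ∃ A, G.IsFragment A ∧ G.vertexBoundary A ⊆ S := by
  obtain ⟨u, v, huv⟩ : ∃ u v, ¬(G.induce Sᶜ).Reachable u v := by
    simpa [Preconnected] using h
  refine ⟨Subtype.val '' {x | (G.induce Sᶜ).Reachable u x}, ⟨⟨u, u, .rfl, rfl⟩, v, ?_, ?_⟩, ?_⟩
  · rintro ⟨x, hx, hxv⟩
    exact huv (Subtype.ext hxv ▸ hx)
  · rintro _ ⟨x, hx, rfl⟩ hxv
    exact huv (hx.trans (induce_adj.2 hxv).reachable)
  · rintro w ⟨hwA, _, ⟨x, hx, rfl⟩, hxw⟩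
    by_contra hwS
    exact hwA ⟨⟨w, hwS⟩, hx.trans (induce_adj.2 hxw).reachable, rfl⟩

lemma not_connected_induce_compl_neighborSet_or_ncard_le_one (v : V) :
    ¬(G.induce (G.neighborSet v)ᶜ).Connected ∨ (G.neighborSet v)ᶜ.ncard ≤ 1 := by
  by_cases h : ∃ w, w ≠ v ∧ ¬G.Adj v w
  · obtain ⟨w, hwv, hvw⟩ := h
    left
    intro hconn
    -- `v` is isolated once its neighbours are removed
    obtain ⟨p⟩ := hconn.preconnected ⟨v, G.notMem_neighborSet_self⟩ ⟨w, hvw⟩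
    cases p with
    | nil => exact hwv rfl
    | @cons _ x _ hadj _ => exact x.2 hadj
  · right
    refine (Set.ncard_le_ncard (t := {v}) fun w hw => ?_).trans (Set.ncard_singleton v).le
    by_contra hwv
    exact h ⟨w, hwv, hw⟩

end SimpleGraph

open SimpleGraph in
theorem kappa_eq_of_isVertexTransitive {V : Type*} [Finite V] [Nonempty V] {G : SimpleGraph V}
    {d : ℕ} (hG : G.Preconnected) (hT : G.IsVertexTransitive) (hG3 : G.CliqueFree 3)
    (hreg : ∀ v, (G.neighborSet v).ncard = d) : kappa G = d := by
  obtain ⟨v⟩ := ‹Nonempty V›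
  have hmem : d ∈ {k | ∃ S : Set V, S.ncard = k ∧ (¬(G.induce Sᶜ).Connected ∨ Sᶜ.ncard ≤ 1)} :=
    ⟨_, hreg v, not_connected_induce_compl_neighborSet_or_ncard_le_one v⟩
  refine le_antisymm (Nat.sInf_le hmem) (le_csInf ⟨d, hmem⟩ ?_)
  rintro _ ⟨S, rfl, hS⟩
  have hcard := Set.ncard_add_ncard_compl S
  by_cases hSc : Sᶜ.ncard ≤ 1
  · have hdeg : d ≤ ({v}ᶜ : Set V).ncard :=
      hreg v ▸ Set.ncard_le_ncard fun w hw => (G.ne_of_adj hw).symm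
    rw [Set.ncard_compl, Set.ncard_singleton] at hdeg
    omega
  · have : Nonempty ↥Sᶜ := (Set.nonempty_of_ncard_ne_zero (by omega)).to_subtype
    obtain ⟨A, hA, hAS⟩ := exists_isFragment_vertexBoundary_subset (G := G)
      fun hpre => hS.resolve_right hSc ⟨hpre⟩
    exact (le_ncard_vertexBoundary_of_isFragment hG hT hG3 hreg hA).trans (Set.ncard_le_ncard hAS)

section BubbleSortStar

open Equiv

variable {n : ℕ} {s : Perm (Fin n)}

lemma exists_swap_of_mem_bsGen (hs : s ∈ bsGen n) : ∃ i j : Fin n, i ≠ j ∧ s = swap i j := by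
  obtain ⟨i, j, rfl, ⟨-, hji⟩ | ⟨hj, -⟩⟩ := hs
  · exact ⟨i, j, hji.symm, rfl⟩
  · exact ⟨i, j, fun h => by omega, rfl⟩

lemma sign_of_mem_bsGen (hs : s ∈ bsGen n) : Perm.sign s = -1 := by
  obtain ⟨i, j, hij, rfl⟩ := exists_swap_of_mem_bsGen hs
  exact Perm.sign_swap hij

lemma ne_one_of_mem_bsGen (hs : s ∈ bsGen n) : s ≠ 1 := by
  rintro rfl
  have h := sign_of_mem_bsGen hs
  rw [map_one] at h
  exact absurd h (by decide)

lemma swap_zero_mem_bsGen {z j : Fin n} (hz : (z : ℕ) = 0) (hj : j ≠ z) : swap z j ∈ bsGen n :=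
  ⟨z, j, rfl, .inl ⟨hz, hj⟩⟩

lemma bsGen_eq_range_union_range (m : ℕ) :
    bsGen (m + 2) = Set.range (fun j : Fin (m + 1) => swap 0 j.succ) ∪
      Set.range (fun i : Fin m => swap (i.succ.castSucc : Fin (m + 2)) i.succ.succ) := by
  ext s
  constructor
  · rintro ⟨i, j, rfl, ⟨hi, hji⟩ | ⟨hj, hi⟩⟩
    · obtain rfl : i = 0 := Fin.ext hi
      obtain ⟨k, rfl⟩ := Fin.exists_succ_eq.2 hji
      exact .inl ⟨k, rfl⟩
    · refine .inr ⟨⟨i - 1, by omega⟩, ?_⟩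
      exact congrArg₂ swap (Fin.ext (by simp; omega)) (Fin.ext (by simp; omega))
  · rintro (⟨j, rfl⟩ | ⟨i, rfl⟩)
    · exact ⟨0, j.succ, rfl, .inl ⟨rfl, Fin.succ_ne_zero j⟩⟩
    · exact ⟨_, _, rfl, .inr ⟨by simp, by simp⟩⟩

lemma ncard_bsGen (hn : 2 ≤ n) : (bsGen n).ncard = 2 * n - 3 := by
  obtain ⟨m, rfl⟩ := Nat.exists_eq_add_of_le' hn
  have hstar : Function.Injective fun j : Fin (m + 1) => swap (0 : Fin (m + 2)) j.succ :=
    (swap_injective_of_left 0).comp (Fin.succ_injective _)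
  have hpath : Function.Injective
      fun i : Fin m => swap (i.succ.castSucc : Fin (m + 2)) i.succ.succ := by
    intro i k h
    have := congrArg (· i.succ.castSucc) h
    simp only [swap_apply_left, swap_apply_def] at this
    split_ifs at this <;> simp only [Fin.ext_iff, Fin.val_castSucc, Fin.val_succ] at * <;> omega
  -- the star transpositions move `0`, the path transpositions fix it
  have hdisj : Disjoint (Set.range fun j : Fin (m + 1) => swap (0 : Fin (m + 2)) j.succ)
      (Set.range fun i : Fin m => swap (i.succ.castSucc : Fin (m + 2)) i.succ.succ) := by
    refine Set.disjoint_left.2 ?_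
    rintro _ ⟨j, rfl⟩ ⟨i, hi⟩
    have := congrArg (· 0) hi
    simp only [swap_apply_left] at this
    rw [swap_apply_of_ne_of_ne (by simp [Fin.ext_iff]) (by simp [Fin.ext_iff])] at this
    exact Fin.succ_ne_zero j this.symm
  rw [bsGen_eq_range_union_range, Set.ncard_union_eq hdisj, Set.ncard_range_of_injective hstar,
    Set.ncard_range_of_injective hpath, Nat.card_eq_fintype_card, Nat.card_eq_fintype_card,
    Fintype.card_fin, Fintype.card_fin]
  omega

namespace BS

lemma adj_iff {g h : Perm (Fin n)} : (BS n).Adj g h ↔ g⁻¹ * h ∈ bsGen n :=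
  ⟨And.right, fun hs => ⟨by rintro rfl; exact ne_one_of_mem_bsGen (inv_mul_cancel g ▸ hs) rfl, hs⟩⟩

lemma neighborSet_eq (g : Perm (Fin n)) : (BS n).neighborSet g = (g * ·) '' bsGen n := by
  ext h
  simp only [SimpleGraph.mem_neighborSet, adj_iff, Set.mem_image]
  exact ⟨fun hs => ⟨_, hs, mul_inv_cancel_left g h⟩, by rintro ⟨s, hs, rfl⟩; simpa using hs⟩

lemma ncard_neighborSet (hn : 2 ≤ n) (g : Perm (Fin n)) :
    ((BS n).neighborSet g).ncard = 2 * n - 3 := by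
  rw [neighborSet_eq, Set.ncard_image_of_injective _ (mul_right_injective g), ncard_bsGen hn]

lemma cliqueFree_three : (BS n).CliqueFree 3 := by
  intro t ht
  obtain ⟨x, y, z, hxy, hxz, hyz, rfl⟩ := SimpleGraph.is3Clique_iff.1 ht
  have h := sign_of_mem_bsGen (adj_iff.1 hxz)
  rw [show x⁻¹ * z = (x⁻¹ * y) * (y⁻¹ * z) by group, map_mul,
    sign_of_mem_bsGen (adj_iff.1 hxy), sign_of_mem_bsGen (adj_iff.1 hyz)] at h
  exact absurd h (by decide)

def mulLeftIso (a : Perm (Fin n)) : BS n ≃g BS n where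
  toEquiv := Equiv.mulLeft a
  map_rel_iff' {g h} := by simp only [Equiv.coe_mulLeft, adj_iff, mul_inv_rev, mul_assoc,
    inv_mul_cancel_left]

lemma isVertexTransitive : (BS n).IsVertexTransitive :=
  fun g h => ⟨mulLeftIso (h * g⁻¹), inv_mul_cancel_right h g⟩

lemma reachable_mul_swap (g : Perm (Fin n)) {x y : Fin n} (hxy : x ≠ y) :
    (BS n).Reachable g (g * swap x y) := by
  have step : ∀ {g s}, s ∈ bsGen n → (BS n).Reachable g (g * s) :=
    fun hs => (adj_iff.2 (by simpa using hs)).reachable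
  set z : Fin n := ⟨0, x.pos⟩
  by_cases hx : x = z
  · rw [hx]
    exact step (swap_zero_mem_bsGen rfl (hx ▸ hxy).symm)
  by_cases hy : y = z
  · rw [hy, swap_comm]
    exact step (swap_zero_mem_bsGen rfl hx)
  -- `swap x y` is conjugate to `swap z y` by the star transposition `swap z x`
  rw [← swap_mul_swap_mul_swap hy hxy.symm, swap_comm y z, ← mul_assoc, ← mul_assoc]
  exact ((step (swap_zero_mem_bsGen rfl hx)).trans (step (swap_zero_mem_bsGen rfl hy))).trans
    (step (swap_zero_mem_bsGen rfl hx))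

lemma preconnected : (BS n).Preconnected := by
  intro g h
  rw [← mul_inv_cancel_left g h]
  induction g⁻¹ * h using Perm.swap_induction_on' with
  | one => rw [mul_one]
  | mul_swap f x y hxy ih => rw [← mul_assoc]; exact ih.trans (reachable_mul_swap _ hxy)

end BS

end BubbleSortStar

/-- For n ≥ 2, κ(BS_n) = 2n − 3. -/
theorem stmt10 (n : ℕ) (hn : 2 ≤ n) : kappa (BS n) = 2 * n - 3 :=
  kappa_eq_of_isVertexTransitive BS.preconnected BS.isVertexTransitive BS.cliqueFree_three
    (BS.ncard_neighborSet hn)
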